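/- arXiv:1510.08612 — 2 statements merged into one kernel-verified Lean document; each statement's English description precedes it below -/
import Mathlib

section
/- Let λ > 0 be a real number and k a fixed natural number. Then the binomial probability mass function Bin(n, λ/n) evaluated at k converges to the Poisson probability mass function with mean λ at k as n → ∞; that is, lim_{n→∞} C(n,k) (λ/n)^k (1 − λ/n)^{n−k} = e^{−λ} λ^k / k!. -/
open Real Filter Finset

private lemma aux_ratio_tendsto (i : ℕ) :
    Tendsto (fun n : ℕ => ((n : ℝ) - i) / n) atTop (nhds 1) := by
  have h : Tendsto (fun n : ℕ => 1 - (i : ℝ) / n) atTop (nhds 1) := by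
    have h0 : Tendsto (fun n : ℕ => (i : ℝ) / n) atTop (nhds 0) :=
      Tendsto.div_atTop tendsto_const_nhds tendsto_natCast_atTop_atTop
    simpa using tendsto_const_nhds.sub h0
  refine h.congr' ?_
  filter_upwards [eventually_gt_atTop 0] with n hn
  have hn' : (n : ℝ) ≠ 0 := Nat.cast_ne_zero.mpr hn.ne'
  field_simp

/-- The binomial pmf `Bin(n, λ/n)` evaluated at a fixed `k` converges to the
Poisson pmf with mean `λ` at `k` as `n → ∞`. -/
theorem binomial_tendsto_poisson (lam : ℝ) (hlam : 0 < lam) (k : ℕ) :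
    Tendsto
      (fun n : ℕ => (n.choose k : ℝ) * (lam / n) ^ k * (1 - lam / n) ^ (n - k))
      atTop
      (nhds (Real.exp (-lam) * lam ^ k / (Nat.factorial k))) := by
  have hbase : Tendsto (fun n : ℕ => 1 - lam / n) atTop (nhds 1) := by
    have h0 : Tendsto (fun n : ℕ => lam / n) atTop (nhds 0) :=
      Tendsto.div_atTop tendsto_const_nhds tendsto_natCast_atTop_atTop
    simpa using tendsto_const_nhds.sub h0
  have hprod : Tendsto (fun n : ℕ => ∏ i ∈ range k, ((n : ℝ) - i) / n) atTop (nhds 1) := by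
    have := tendsto_finset_prod (range k)
      (fun i _ => aux_ratio_tendsto i)
    simpa using this
  have hexp : Tendsto (fun n : ℕ => (1 - lam / n) ^ n) atTop (nhds (Real.exp (-lam))) := by
    have := Real.tendsto_one_add_div_pow_exp (-lam)
    simpa [sub_eq_add_neg, neg_div] using this
  have hpow : Tendsto (fun n : ℕ => (1 - lam / n) ^ k) atTop (nhds 1) := by
    simpa using hbase.pow k
  have hg : Tendsto
      (fun n : ℕ => (∏ i ∈ range k, ((n : ℝ) - i) / n) * (lam ^ k / (Nat.factorial k)) *
        ((1 - lam / n) ^ n / (1 - lam / n) ^ k)) atTop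
      (nhds (Real.exp (-lam) * lam ^ k / (Nat.factorial k))) := by
    have hc : Tendsto (fun _ : ℕ => lam ^ k / (Nat.factorial k : ℝ)) atTop
        (nhds (lam ^ k / (Nat.factorial k : ℝ))) := tendsto_const_nhds
    have := (hprod.mul hc).mul (hexp.div hpow one_ne_zero)
    convert this using 2
    · simp only [Pi.div_apply]
    · ring
  refine hg.congr' ?_
  filter_upwards [eventually_gt_atTop (max k ⌈lam⌉₊)] with n hn
  have hkn : k ≤ n := le_of_lt (lt_of_le_of_lt (le_max_left _ _) hn)
  have hn0 : 0 < n := lt_of_le_of_lt (Nat.zero_le _) hn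
  have hnR : (0 : ℝ) < n := Nat.cast_pos.mpr hn0
  have hlamn : lam < n := by
    calc lam ≤ ⌈lam⌉₊ := Nat.le_ceil lam
    _ < n := Nat.cast_lt.mpr (lt_of_le_of_lt (le_max_right _ _) hn)
  have hb : 0 < 1 - lam / n := by
    rw [sub_pos, div_lt_one hnR]; exact hlamn
  have hsub : (1 - lam / n) ^ (n - k) = (1 - lam / n) ^ n / (1 - lam / n) ^ k :=
    pow_sub₀ _ hb.ne' hkn
  have hdesc : (n.descFactorial k : ℝ) = ∏ i ∈ range k, ((n : ℝ) - i) := by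
    rw [Nat.descFactorial_eq_prod_range, Nat.cast_prod]
    refine Finset.prod_congr rfl fun i hi => ?_
    rw [Nat.cast_sub (le_trans (le_of_lt (mem_range.mp hi)) hkn)]
  have hchoose : (n.choose k : ℝ) = (∏ i ∈ range k, ((n : ℝ) - i)) / (Nat.factorial k) := by
    rw [← hdesc, eq_div_iff (Nat.cast_ne_zero.mpr (Nat.factorial_ne_zero k))]
    rw [← Nat.cast_mul, mul_comm, ← Nat.descFactorial_eq_factorial_mul_choose]
  rw [hchoose, hsub, div_pow, Finset.prod_div_distrib]
  rw [Finset.prod_const, Finset.card_range]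
  field_simp
end

section
/- Let (Ω, μ) be a probability space, S a real M×n matrix with SᵀS invertible, c ∈ ℝ^n, and r : Ω → ℝ^M a square-integrable random vector with mean E[r] = S c and covariance matrix E[(r − S c)(r − S c)ᵀ] = diag(S c) (the diagonal matrix with diagonal entries (S c)_1, …, (S c)_M). Then the expected squared error of the unconstrained LSSE estimate ĉ = (SᵀS)⁻¹ Sᵀ r satisfies E[ ‖c − ĉ‖² ] = tr( S (SᵀS)⁻² Sᵀ · diag(S c) ) = ∑_{i=1}^{M} [S (SᵀS)⁻² Sᵀ]_{ii} (S c)_i. -/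
open Matrix MeasureTheory

lemma aux_int_mul {Ω : Type*} [MeasurableSpace Ω] {μ : Measure Ω}
    {f g : Ω → ℝ} (hf : MemLp f 2 μ) (hg : MemLp g 2 μ) :
    Integrable (fun ω => f ω * g ω) μ := by
  have h : MemLp (f • g) 1 μ := hg.smul hf
  exact memLp_one_iff_integrable.mp h

/-- If the observation vector `r` is square-integrable with mean `S c` and
covariance matrix `diag(S c)`, then the expected squared error of the
unconstrained LSSE estimate `ĉ = (SᵀS)⁻¹ Sᵀ r` equals
`tr(S (SᵀS)⁻² Sᵀ diag(S c)) = ∑_i [S (SᵀS)⁻² Sᵀ]_{ii} (S c)_i`. -/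
theorem lsse_expected_squared_error (M n : ℕ)
    (S : Matrix (Fin M) (Fin n) ℝ) (hS : IsUnit (Sᵀ * S).det)
    (c : Fin n → ℝ)
    {Ω : Type*} [MeasurableSpace Ω] (μ : Measure Ω) [IsProbabilityMeasure μ]
    (r : Ω → Fin M → ℝ)
    (hL2 : ∀ i, MemLp (fun ω => r ω i) 2 μ)
    (hmean : ∀ i, ∫ ω, r ω i ∂μ = S.mulVec c i)
    (hcov : ∀ i j, ∫ ω, (r ω i - S.mulVec c i) * (r ω j - S.mulVec c j) ∂μ =
      (if i = j then S.mulVec c i else 0)) :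
    (∫ ω, ∑ j, (c j - ((Sᵀ * S)⁻¹.mulVec (Sᵀ.mulVec (r ω))) j) ^ 2 ∂μ =
      Matrix.trace (S * ((Sᵀ * S)⁻¹) ^ 2 * Sᵀ * Matrix.diagonal (S.mulVec c)))
    ∧ Matrix.trace (S * ((Sᵀ * S)⁻¹) ^ 2 * Sᵀ * Matrix.diagonal (S.mulVec c)) =
      ∑ i, Matrix.diag (S * ((Sᵀ * S)⁻¹) ^ 2 * Sᵀ) i * S.mulVec c i := by
  set A : Matrix (Fin n) (Fin M) ℝ := (Sᵀ * S)⁻¹ * Sᵀ with hA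
  set e : Ω → Fin M → ℝ := fun ω i => r ω i - S.mulVec c i with he
  have heL2 : ∀ i, MemLp (fun ω => e ω i) 2 μ := fun i =>
    (hL2 i).sub (memLp_const _)
  have hAc : A.mulVec (S.mulVec c) = c := by
    rw [hA, Matrix.mulVec_mulVec, Matrix.mul_assoc, Matrix.nonsing_inv_mul _ hS,
      Matrix.one_mulVec]
  -- trace of B * diagonal v
  have htr : ∀ (B : Matrix (Fin M) (Fin M) ℝ) (v : Fin M → ℝ),
      Matrix.trace (B * Matrix.diagonal v) = ∑ i, Matrix.diag B i * v i := by
    intro B v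
    simp [Matrix.trace, Matrix.mul_apply, Matrix.diagonal_apply, Matrix.diag,
      Finset.sum_ite_eq', mul_ite, mul_zero]
  -- pointwise identity
  have hpt : ∀ ω, ∑ j, (c j - ((Sᵀ * S)⁻¹.mulVec (Sᵀ.mulVec (r ω))) j) ^ 2 =
      ∑ j, ∑ i, ∑ k, A j i * A j k * (e ω i * e ω k) := by
    intro ω
    have h1 : r ω = S.mulVec c + e ω := by
      funext i; simp [he]
    have h2 : (Sᵀ * S)⁻¹.mulVec (Sᵀ.mulVec (r ω)) = c + A.mulVec (e ω) := by
      rw [Matrix.mulVec_mulVec, ← hA, h1, Matrix.mulVec_add, hAc]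
    refine Finset.sum_congr rfl fun j _ => ?_
    have h3 : c j - ((Sᵀ * S)⁻¹.mulVec (Sᵀ.mulVec (r ω))) j = -(A.mulVec (e ω) j) := by
      rw [h2]; simp
    rw [h3, neg_pow, neg_one_sq, one_mul, Matrix.mulVec, dotProduct, sq,
      Finset.sum_mul_sum]
    exact Finset.sum_congr rfl fun i _ => Finset.sum_congr rfl fun k _ => by ring
  have hint : ∀ i k : Fin M, Integrable (fun ω => e ω i * e ω k) μ := fun i k =>
    aux_int_mul (heL2 i) (heL2 k)
  have hI : ∫ ω, ∑ j, (c j - ((Sᵀ * S)⁻¹.mulVec (Sᵀ.mulVec (r ω))) j) ^ 2 ∂μ =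
      ∑ j, ∑ i : Fin M, A j i ^ 2 * S.mulVec c i := by
    rw [integral_congr_ae (Filter.Eventually.of_forall hpt)]
    rw [integral_finset_sum _ fun j _ => integrable_finset_sum _ fun i _ =>
      integrable_finset_sum _ fun k _ => ((hint i k).const_mul _)]
    refine Finset.sum_congr rfl fun j _ => ?_
    rw [integral_finset_sum _ fun i _ => integrable_finset_sum _ fun k _ =>
      ((hint i k).const_mul _)]
    refine Finset.sum_congr rfl fun i _ => ?_
    rw [integral_finset_sum _ fun k _ => ((hint i k).const_mul _)]
    have h4 : ∀ k, ∫ ω, A j i * A j k * (e ω i * e ω k) ∂μ =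
        A j i * A j k * (if i = k then S.mulVec c i else 0) := by
      intro k
      rw [integral_const_mul, hcov i k]
    simp only [h4]
    rw [Finset.sum_eq_single i]
    · simp [sq]
    · intro k _ hk; simp [Ne.symm hk]
    · intro h; exact absurd (Finset.mem_univ i) h
  have hAtA : S * ((Sᵀ * S)⁻¹) ^ 2 * Sᵀ = Aᵀ * A := by
    have hAt : Aᵀ = S * ((Sᵀ * S)⁻¹) := by
      rw [hA, Matrix.transpose_mul, Matrix.transpose_nonsing_inv, Matrix.transpose_mul, Matrix.transpose_transpose]
    rw [hAt, hA, sq, Matrix.mul_assoc, Matrix.mul_assoc, Matrix.mul_assoc]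
  constructor
  · rw [hI, htr, Finset.sum_comm, hAtA]
    refine Finset.sum_congr rfl fun i _ => ?_
    simp only [Matrix.diag_apply, Matrix.mul_apply, Matrix.transpose_apply,
      Finset.sum_mul]
    exact Finset.sum_congr rfl fun j _ => by ring
  · exact htr _ _
end
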